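/- Maximality under unions of action families: suppose X¹_s and X²_s are nonempty subsets of X_s for every s ∈ S. Let m¹, M¹ be fixed points of the min–max and max–min operators built from X¹, let m², M² be fixed points of the operators built from X², and let m*, M* be fixed points of the operators built from the union family (X¹ ∪ X²)_s := X¹_s ∪ X²_s. Then for all s ∈ S: m*(s) ≤ min(m¹(s), m²(s)) and M*(s) ≥ max(M¹(s), M²(s)). -/
import Mathlib


/-- The Bellman min–max operator built from a family `Z` of autocrat action sets:
`s ↦ min_{x ∈ Z s} max_{y ∈ Y s} (λ·m(T(x,y;s)) + (1−λ)·U(x,y;s))`. -/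
noncomputable def bellmanMinMaxOn {S : Type*} (X Y : S → Type*)
    [∀ s, Fintype (X s)] [∀ s, Fintype (Y s)] [∀ s, Nonempty (Y s)]
    (T : ∀ s, X s → Y s → S) (U : ∀ s, X s → Y s → ℝ) (lam : ℝ)
    (Z : ∀ s, Finset (X s)) (hZ : ∀ s, (Z s).Nonempty)
    (m : S → ℝ) (s : S) : ℝ :=
  (Z s).inf' (hZ s) fun x =>
    Finset.univ.sup' Finset.univ_nonempty fun y : Y s =>
      lam * m (T s x y) + (1 - lam) * U s x y

/-- The Bellman max–min operator built from a family `Z` of autocrat action sets: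
`s ↦ max_{x ∈ Z s} min_{y ∈ Y s} (λ·M(T(x,y;s)) + (1−λ)·U(x,y;s))`. -/
noncomputable def bellmanMaxMinOn {S : Type*} (X Y : S → Type*)
    [∀ s, Fintype (X s)] [∀ s, Fintype (Y s)] [∀ s, Nonempty (Y s)]
    (T : ∀ s, X s → Y s → S) (U : ∀ s, X s → Y s → ℝ) (lam : ℝ)
    (Z : ∀ s, Finset (X s)) (hZ : ∀ s, (Z s).Nonempty)
    (M : S → ℝ) (s : S) : ℝ :=
  (Z s).sup' (hZ s) fun x =>
    Finset.univ.inf' Finset.univ_nonempty fun y : Y s =>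
      lam * M (T s x y) + (1 - lam) * U s x y

lemma minmax_sub_mono {S : Type*} [Fintype S] [Nonempty S]
    (X Y : S → Type*)
    [∀ s, Fintype (X s)] [∀ s, Fintype (Y s)] [∀ s, Nonempty (Y s)]
    (T : ∀ s, X s → Y s → S) (U : ∀ s, X s → Y s → ℝ)
    (lam : ℝ) (hlam : lam ∈ Set.Ioo (0 : ℝ) 1)
    (Z Z' : ∀ s, Finset (X s)) (hZ : ∀ s, (Z s).Nonempty) (hZ' : ∀ s, (Z' s).Nonempty)
    (hsub : ∀ s, Z s ⊆ Z' s)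
    (m m' : S → ℝ)
    (hm : ∀ s, m s = bellmanMinMaxOn X Y T U lam Z hZ m s)
    (hm' : ∀ s, m' s = bellmanMinMaxOn X Y T U lam Z' hZ' m' s) :
    ∀ s, m' s ≤ m s := by
  obtain ⟨s0, -, hs0⟩ := Finset.exists_mem_eq_sup'
    (Finset.univ_nonempty (α := S)) (fun s : S => m' s - m s)
  set d : ℝ := m' s0 - m s0 with hdd
  have hle : ∀ s, m' s - m s ≤ d := fun s => by
    calc m' s - m s ≤ Finset.univ.sup' Finset.univ_nonempty (fun s : S => m' s - m s) :=
          Finset.le_sup' (fun s : S => m' s - m s) (Finset.mem_univ s)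
      _ = d := hs0
  have key : d ≤ lam * d := by
    obtain ⟨x0, hx0mem, hx0⟩ := Finset.exists_mem_eq_inf' (hZ s0)
      (fun x => Finset.univ.sup' Finset.univ_nonempty fun y : Y s0 =>
        lam * m (T s0 x y) + (1 - lam) * U s0 x y)
    have h1 : m' s0 ≤ Finset.univ.sup' Finset.univ_nonempty
        (fun y : Y s0 => lam * m' (T s0 x0 y) + (1 - lam) * U s0 x0 y) := by
      rw [hm' s0]
      exact Finset.inf'_le
        (fun x => Finset.univ.sup' Finset.univ_nonempty fun y : Y s0 =>
          lam * m' (T s0 x y) + (1 - lam) * U s0 x y) (hsub s0 hx0mem)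
    obtain ⟨y0, -, hy0⟩ := Finset.exists_mem_eq_sup' (Finset.univ_nonempty (α := Y s0))
      (fun y : Y s0 => lam * m' (T s0 x0 y) + (1 - lam) * U s0 x0 y)
    have h2 : lam * m' (T s0 x0 y0) + (1 - lam) * U s0 x0 y0
        ≤ (lam * m (T s0 x0 y0) + (1 - lam) * U s0 x0 y0) + lam * d := by
      have := hle (T s0 x0 y0)
      nlinarith [hlam.1]
    have h3 : lam * m (T s0 x0 y0) + (1 - lam) * U s0 x0 y0
        ≤ Finset.univ.sup' Finset.univ_nonempty
          (fun y : Y s0 => lam * m (T s0 x0 y) + (1 - lam) * U s0 x0 y) :=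
      Finset.le_sup' (fun y : Y s0 => lam * m (T s0 x0 y) + (1 - lam) * U s0 x0 y)
        (Finset.mem_univ y0)
    have h4 : Finset.univ.sup' Finset.univ_nonempty
        (fun y : Y s0 => lam * m (T s0 x0 y) + (1 - lam) * U s0 x0 y) = m s0 := by
      rw [hm s0, bellmanMinMaxOn, ← hx0]
    rw [hy0] at h1
    rw [hdd] at h2 ⊢
    linarith
  have hd0 : d ≤ 0 := by nlinarith [hlam.2]
  intro s
  linarith [hle s, hd0]

lemma maxmin_sub_mono {S : Type*} [Fintype S] [Nonempty S]
    (X Y : S → Type*)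
    [∀ s, Fintype (X s)] [∀ s, Fintype (Y s)] [∀ s, Nonempty (Y s)]
    (T : ∀ s, X s → Y s → S) (U : ∀ s, X s → Y s → ℝ)
    (lam : ℝ) (hlam : lam ∈ Set.Ioo (0 : ℝ) 1)
    (Z Z' : ∀ s, Finset (X s)) (hZ : ∀ s, (Z s).Nonempty) (hZ' : ∀ s, (Z' s).Nonempty)
    (hsub : ∀ s, Z s ⊆ Z' s)
    (M M' : S → ℝ)
    (hM : ∀ s, M s = bellmanMaxMinOn X Y T U lam Z hZ M s)
    (hM' : ∀ s, M' s = bellmanMaxMinOn X Y T U lam Z' hZ' M' s) :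
    ∀ s, M s ≤ M' s := by
  obtain ⟨s0, -, hs0⟩ := Finset.exists_mem_eq_sup'
    (Finset.univ_nonempty (α := S)) (fun s : S => M s - M' s)
  set d : ℝ := M s0 - M' s0 with hdd
  have hle : ∀ s, M s - M' s ≤ d := fun s => by
    calc M s - M' s ≤ Finset.univ.sup' Finset.univ_nonempty (fun s : S => M s - M' s) :=
          Finset.le_sup' (fun s : S => M s - M' s) (Finset.mem_univ s)
      _ = d := hs0
  have key : d ≤ lam * d := by
    obtain ⟨x0, hx0mem, hx0⟩ := Finset.exists_mem_eq_sup' (hZ s0)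
      (fun x => Finset.univ.inf' Finset.univ_nonempty fun y : Y s0 =>
        lam * M (T s0 x y) + (1 - lam) * U s0 x y)
    have h1 : Finset.univ.inf' Finset.univ_nonempty
        (fun y : Y s0 => lam * M' (T s0 x0 y) + (1 - lam) * U s0 x0 y) ≤ M' s0 := by
      rw [hM' s0]
      exact Finset.le_sup'
        (fun x => Finset.univ.inf' Finset.univ_nonempty fun y : Y s0 =>
          lam * M' (T s0 x y) + (1 - lam) * U s0 x y) (hsub s0 hx0mem)
    obtain ⟨y0, -, hy0⟩ := Finset.exists_mem_eq_inf' (Finset.univ_nonempty (α := Y s0))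
      (fun y : Y s0 => lam * M' (T s0 x0 y) + (1 - lam) * U s0 x0 y)
    have h2 : (lam * M (T s0 x0 y0) + (1 - lam) * U s0 x0 y0) - lam * d
        ≤ lam * M' (T s0 x0 y0) + (1 - lam) * U s0 x0 y0 := by
      have := hle (T s0 x0 y0)
      nlinarith [hlam.1]
    have h3 : Finset.univ.inf' Finset.univ_nonempty
          (fun y : Y s0 => lam * M (T s0 x0 y) + (1 - lam) * U s0 x0 y)
        ≤ lam * M (T s0 x0 y0) + (1 - lam) * U s0 x0 y0 :=
      Finset.inf'_le (fun y : Y s0 => lam * M (T s0 x0 y) + (1 - lam) * U s0 x0 y)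
        (Finset.mem_univ y0)
    have h4 : Finset.univ.inf' Finset.univ_nonempty
        (fun y : Y s0 => lam * M (T s0 x0 y) + (1 - lam) * U s0 x0 y) = M s0 := by
      rw [hM s0, bellmanMaxMinOn, ← hx0]
    rw [hy0] at h1
    rw [hdd] at h2 ⊢
    linarith
  have hd0 : d ≤ 0 := by nlinarith [hlam.2]
  intro s
  linarith [hle s, hd0]

/-- Maximality under unions of action families: fixed points for the
union family `X¹ ∪ X²` satisfy `m* ≤ min(m¹, m²)` and `M* ≥ max(M¹, M²)` pointwise. -/
theorem union_family_maximality
    {S : Type*} [Fintype S] [Nonempty S]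
    (X Y : S → Type*)
    [∀ s, Fintype (X s)] [∀ s, Nonempty (X s)] [∀ s, DecidableEq (X s)]
    [∀ s, Fintype (Y s)] [∀ s, Nonempty (Y s)]
    (T : ∀ s, X s → Y s → S) (U : ∀ s, X s → Y s → ℝ)
    (lam : ℝ) (hlam : lam ∈ Set.Ioo (0 : ℝ) 1)
    (X1 X2 : ∀ s, Finset (X s)) (hX1 : ∀ s, (X1 s).Nonempty) (hX2 : ∀ s, (X2 s).Nonempty)
    (m1 M1 m2 M2 mStar MStar : S → ℝ)
    (hm1 : ∀ s, m1 s = bellmanMinMaxOn X Y T U lam X1 hX1 m1 s)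
    (hM1 : ∀ s, M1 s = bellmanMaxMinOn X Y T U lam X1 hX1 M1 s)
    (hm2 : ∀ s, m2 s = bellmanMinMaxOn X Y T U lam X2 hX2 m2 s)
    (hM2 : ∀ s, M2 s = bellmanMaxMinOn X Y T U lam X2 hX2 M2 s)
    (hmStar : ∀ s, mStar s = bellmanMinMaxOn X Y T U lam (fun s => X1 s ∪ X2 s)
      (fun s => (hX1 s).mono Finset.subset_union_left) mStar s)
    (hMStar : ∀ s, MStar s = bellmanMaxMinOn X Y T U lam (fun s => X1 s ∪ X2 s)
      (fun s => (hX1 s).mono Finset.subset_union_left) MStar s) :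
    ∀ s, mStar s ≤ min (m1 s) (m2 s) ∧ max (M1 s) (M2 s) ≤ MStar s := by
  intro s
  have hsub1 : ∀ s, X1 s ⊆ X1 s ∪ X2 s := fun s => Finset.subset_union_left
  have hsub2 : ∀ s, X2 s ⊆ X1 s ∪ X2 s := fun s => Finset.subset_union_right
  have hm1' := minmax_sub_mono X Y T U lam hlam X1 _ hX1 _ hsub1 m1 mStar hm1 hmStar
  have hm2' := minmax_sub_mono X Y T U lam hlam X2 _ hX2 _ hsub2 m2 mStar hm2 hmStar
  have hM1' := maxmin_sub_mono X Y T U lam hlam X1 _ hX1 _ hsub1 M1 MStar hM1 hMStar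
  have hM2' := maxmin_sub_mono X Y T U lam hlam X2 _ hX2 _ hsub2 M2 MStar hM2 hMStar
  exact ⟨le_min (hm1' s) (hm2' s), max_le (hM1' s) (hM2' s)⟩
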